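/- Let X be an n×n symmetric positive definite real matrix and K̂ = diag(k₁,...,kₙ) with ε λ_max(X⁻¹) ≤ kᵢ ≤ (2-ε) λ_min(X⁻¹) for all i, where ε ∈ (0,1). Then -(1-ε) I ⪯ I - X^{1/2} K̂ X^{1/2} ⪯ (1-ε) I. -/

import Mathlib

/-!
Since `ε λ_max(X⁻¹) ≤ kᵢ ≤ (2 - ε) λ_min(X⁻¹)`, the diagonal matrix `K̂ = diag k` lies between
`ε X⁻¹` and `(2 - ε) X⁻¹` in the Loewner order. Conjugation by the self-adjoint square root
`S = X^{1/2}` preserves that order and sends `X⁻¹` to `S X⁻¹ S = 1`, so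
`ε I ⪯ S K̂ S ⪯ (2 - ε) I`, which is the claim after subtracting from `I`.
-/

open Matrix

open scoped ComplexOrder in
noncomputable def Matrix.PosSemidef.sqrt {n 𝕜 : Type*} [Fintype n] [DecidableEq n] [RCLike 𝕜]
    {A : Matrix n n 𝕜} (hA : A.PosSemidef) : Matrix n n 𝕜 :=
  hA.1.eigenvectorUnitary.1 * diagonal ((↑) ∘ (√·) ∘ hA.1.eigenvalues) *
  (star hA.1.eigenvectorUnitary : Matrix n n 𝕜)

open scoped MatrixOrder ComplexOrder

namespace Matrix

variable {n 𝕜 : Type*} [DecidableEq n] [RCLike 𝕜]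

theorem diagonal_le_diagonal {d e : n → 𝕜} (h : d ≤ e) : diagonal d ≤ diagonal e := by
  rw [le_iff, diagonal_sub]
  exact PosSemidef.diagonal (sub_nonneg.mpr h)

variable [Fintype n]

theorem PosSemidef.sqrt_eq_cfcSqrt {A : Matrix n n 𝕜} (hA : A.PosSemidef) :
    hA.sqrt = CFC.sqrt A := by
  rw [CFC.sqrt_eq_real_sqrt A hA.nonneg, cfcₙ_eq_cfc, hA.1.cfc_eq]
  rfl

theorem IsHermitian.le_smul_one_of_eigenvalues_le {A : Matrix n n 𝕜} (hA : A.IsHermitian)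
    {c : ℝ} (h : ∀ i, hA.eigenvalues i ≤ c) : A ≤ c • 1 := by
  rw [← Algebra.algebraMap_eq_smul_one, le_algebraMap_iff_spectrum_le hA.isSelfAdjoint,
    hA.spectrum_real_eq_range_eigenvalues]
  rintro _ ⟨i, rfl⟩
  exact h i

theorem IsHermitian.smul_one_le_of_le_eigenvalues {A : Matrix n n 𝕜} (hA : A.IsHermitian)
    {c : ℝ} (h : ∀ i, c ≤ hA.eigenvalues i) : c • 1 ≤ A := by
  rw [← Algebra.algebraMap_eq_smul_one, algebraMap_le_iff_le_spectrum hA.isSelfAdjoint,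
    hA.spectrum_real_eq_range_eigenvalues]
  rintro _ ⟨i, rfl⟩
  exact h i

theorem mul_inv_mul_eq_one_of_mul_self_eq {R : Type*} [CommRing R] {S A : Matrix n n R}
    (hA : IsUnit A) (hSS : S * S = A) : S * A⁻¹ * S = 1 := by
  have hS : IsUnit S.det := (isUnit_iff_isUnit_det S).mp (isUnit_of_mul_isUnit_left (hSS ▸ hA))
  rw [← hSS, mul_inv_rev, ← mul_assoc, mul_nonsing_inv S hS, one_mul, nonsing_inv_mul S hS]

theorem IsHermitian.smul_le_diagonal {A : Matrix n n ℝ} (hA : A.IsHermitian) {c : ℝ}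
    (hc : 0 ≤ c) {d : n → ℝ} (hd : ∀ i, c * (⨆ j, hA.eigenvalues j) ≤ d i) :
    c • A ≤ diagonal d := calc
  c • A ≤ c • (⨆ j, hA.eigenvalues j) • 1 :=
    smul_le_smul_of_nonneg_left (hA.le_smul_one_of_eigenvalues_le (Finite.le_ciSup _)) hc
  _ ≤ diagonal d := by
    rw [smul_smul, smul_one_eq_diagonal]
    exact diagonal_le_diagonal hd

theorem IsHermitian.diagonal_le_smul {A : Matrix n n ℝ} (hA : A.IsHermitian) {c : ℝ}
    (hc : 0 ≤ c) {d : n → ℝ} (hd : ∀ i, d i ≤ c * (⨅ j, hA.eigenvalues j)) :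
    diagonal d ≤ c • A := calc
  diagonal d ≤ c • (⨅ j, hA.eigenvalues j) • 1 := by
    rw [smul_smul, smul_one_eq_diagonal]
    exact diagonal_le_diagonal hd
  _ ≤ c • A :=
    smul_le_smul_of_nonneg_left (hA.smul_one_le_of_le_eigenvalues (Finite.ciInf_le _)) hc

end Matrix

theorem stmt_9_general {n : ℕ} (X : Matrix (Fin n) (Fin n) ℝ) (k : Fin n → ℝ)
    (ε : ℝ) (hε : 0 < ε ∧ ε < 1) (hX : X.PosDef) (hXinv : (X⁻¹).IsHermitian)
    (hk : ∀ i, ε * (⨆ j, hXinv.eigenvalues j) ≤ k i ∧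
      k i ≤ (2 - ε) * (⨅ j, hXinv.eigenvalues j)) :
    ((1 - ε) • (1 : Matrix (Fin n) (Fin n) ℝ)
        - (1 - (PosSemidef.sqrt hX.posSemidef) * diagonal k * (PosSemidef.sqrt hX.posSemidef))).PosSemidef ∧
    ((1 - (PosSemidef.sqrt hX.posSemidef) * diagonal k * (PosSemidef.sqrt hX.posSemidef))
        - (-(1 - ε)) • (1 : Matrix (Fin n) (Fin n) ℝ)).PosSemidef := by
  rw [hX.posSemidef.sqrt_eq_cfcSqrt]
  set S := CFC.sqrt X
  have hS : 0 ≤ S := CFC.sqrt_nonneg X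
  have hSXS : S * X⁻¹ * S = 1 :=
    mul_inv_mul_eq_one_of_mul_self_eq hX.isUnit (CFC.sqrt_mul_sqrt_self X hX.posSemidef.nonneg)
  have lower : ε • X⁻¹ ≤ diagonal k := hXinv.smul_le_diagonal hε.1.le fun i => (hk i).1
  have upper : diagonal k ≤ (2 - ε) • X⁻¹ :=
    hXinv.diagonal_le_smul (by linarith [hε.2]) fun i => (hk i).2
  have hSKS_ge : ε • 1 ≤ S * diagonal k * S := by
    simpa only [mul_smul_comm, smul_mul_assoc, hSXS] using conjugate_le_conjugate_of_nonneg lower hS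
  have hSKS_le : S * diagonal k * S ≤ (2 - ε) • 1 := by
    simpa only [mul_smul_comm, smul_mul_assoc, hSXS] using conjugate_le_conjugate_of_nonneg upper hS
  constructor
  · rw [← le_iff]
    calc 1 - S * diagonal k * S ≤ 1 - ε • 1 := sub_le_sub_left hSKS_ge 1
      _ = (1 - ε) • 1 := by module
  · rw [← le_iff]
    calc (-(1 - ε)) • 1 = 1 - (2 - ε) • (1 : Matrix (Fin n) (Fin n) ℝ) := by module
      _ ≤ 1 - S * diagonal k * S := sub_le_sub_left hSKS_le 1

/-- Decentralized condition (a) of Corollary 1: if each diagonal gain satisfies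
`ε λ_max(X⁻¹) ≤ kᵢ ≤ (2-ε) λ_min(X⁻¹)`, then
`-(1-ε) I ⪯ I - X^{1/2} K̂ X^{1/2} ⪯ (1-ε) I` (Loewner order). -/
theorem stmt_9 {n : ℕ} [NeZero n] (X : Matrix (Fin n) (Fin n) ℝ) (k : Fin n → ℝ)
    (ε : ℝ) (hε : 0 < ε ∧ ε < 1) (hX : X.PosDef) (hXinv : (X⁻¹).IsHermitian)
    (hk : ∀ i, ε * (⨆ j, hXinv.eigenvalues j) ≤ k i ∧
      k i ≤ (2 - ε) * (⨅ j, hXinv.eigenvalues j)) :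
    ((1 - ε) • (1 : Matrix (Fin n) (Fin n) ℝ)
        - (1 - (PosSemidef.sqrt hX.posSemidef) * diagonal k * (PosSemidef.sqrt hX.posSemidef))).PosSemidef ∧
    ((1 - (PosSemidef.sqrt hX.posSemidef) * diagonal k * (PosSemidef.sqrt hX.posSemidef))
        - (-(1 - ε)) • (1 : Matrix (Fin n) (Fin n) ℝ)).PosSemidef :=
  stmt_9_general X k ε hε hX hXinv hk
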